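/- If f ∈ D(S), then lim_{x→1⁻}(1−x²)²f″(x) = 0 and lim_{x→−1⁺}(1−x²)²f″(x) = 0. -/

import Mathlib

open MeasureTheory Set Filter

noncomputable section

/-- `f` is locally absolutely continuous on `(-1,1)` with a.e. derivative `f'`,
expressed via the fundamental theorem of calculus. -/
def LocACOn (f f' : ℝ → ℂ) : Prop :=
  ∀ x ∈ Ioo (-1:ℝ) 1, ∀ y ∈ Ioo (-1:ℝ) 1,
    IntervalIntegrable f' volume x y ∧ f y - f x = ∫ t in x..y, f' t

/-- membership in `L²(-1,1)` -/
def L2I (g : ℝ → ℂ) : Prop :=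
  MemLp g 2 (volume.restrict (Ioo (-1:ℝ) 1))

/-- the Legendre expression `ℓ[f] = -((1-x²)f′)′ = -(1-x²)f″ + 2x f′`. -/
def leg (f1 f2 : ℝ → ℂ) (x : ℝ) : ℂ :=
  ((2*x : ℝ) : ℂ) * f1 x - ((1 - x^2 : ℝ) : ℂ) * f2 x

/-- the derivative `(ℓ[f])′ = 2f′ + 4x f″ - (1-x²)f‴`. -/
def legD (f1 f2 f3 : ℝ → ℂ) (x : ℝ) : ℂ :=
  (2 : ℂ) * f1 x + ((4*x : ℝ) : ℂ) * f2 x - ((1 - x^2 : ℝ) : ℂ) * f3 x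

/-- the second derivative `(ℓ[f])″ = 6f″ + 6x f‴ - (1-x²)f⁗`. -/
def legDD (f2 f3 f4 : ℝ → ℂ) (x : ℝ) : ℂ :=
  (6 : ℂ) * f2 x + ((6*x : ℝ) : ℂ) * f3 x - ((1 - x^2 : ℝ) : ℂ) * f4 x

/-- `ℓ²[f] = ((1-x²)²f″)″ - 2((1-x²)f′)′
           = (1-x²)²f⁗ - 8x(1-x²)f‴ + (14x²-6)f″ + 4x f′`. -/
def legSq (f1 f2 f3 f4 : ℝ → ℂ) (x : ℝ) : ℂ :=
  (((1 - x^2)^2 : ℝ) : ℂ) * f4 x - ((8*x*(1 - x^2) : ℝ) : ℂ) * f3 x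
    + ((14*x^2 - 6 : ℝ) : ℂ) * f2 x + ((4*x : ℝ) : ℂ) * f1 x

/-- `((1-x²)²f″)′ = (1-x²)²f‴ - 4x(1-x²)f″`. -/
def sqTermD (f2 f3 : ℝ → ℂ) (x : ℝ) : ℂ :=
  (((1 - x^2)^2 : ℝ) : ℂ) * f3 x - ((4*x*(1 - x^2) : ℝ) : ℂ) * f2 x

/-- `[f,1]₂(x) = ((1-x²)²f″)′ - 2(1-x²)f′`. -/
def bket1 (f1 f2 f3 : ℝ → ℂ) (x : ℝ) : ℂ :=
  sqTermD f2 f3 x - ((2*(1 - x^2) : ℝ) : ℂ) * f1 x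

/-- `[f,x]₂(x) = x[f,1]₂(x) - (1-x²)²f″ + 2(1-x²)f`. -/
def bketX (f f1 f2 f3 : ℝ → ℂ) (x : ℝ) : ℂ :=
  (x : ℂ) * bket1 f1 f2 f3 x - (((1 - x^2)^2 : ℝ) : ℂ) * f2 x
    + ((2*(1 - x^2) : ℝ) : ℂ) * f x

/-- the maximal domain `Δ_{2,max}` of `ℓ²` in `L²(-1,1)`:
`f, f′, f″, f‴` locally absolutely continuous and `f, ℓ²[f] ∈ L²(-1,1)`. -/
def Delta2Max (f f1 f2 f3 f4 : ℝ → ℂ) : Prop :=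
  LocACOn f f1 ∧ LocACOn f1 f2 ∧ LocACOn f2 f3 ∧ LocACOn f3 f4 ∧
    L2I f ∧ L2I (legSq f1 f2 f3 f4)

/-- the filter `x → 1⁻` from within `(-1,1)`. -/
def atOne : Filter ℝ := nhdsWithin 1 (Ioo (-1:ℝ) 1)

/-- the filter `x → -1⁺` from within `(-1,1)`. -/
def atNegOne : Filter ℝ := nhdsWithin (-1) (Ioo (-1:ℝ) 1)

/-- the GKN domain `D(S)`. -/
def DS (f f1 f2 f3 f4 : ℝ → ℂ) : Prop :=
  Delta2Max f f1 f2 f3 f4 ∧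
  Tendsto (bket1 f1 f2 f3) atOne (nhds 0) ∧
  Tendsto (bket1 f1 f2 f3) atNegOne (nhds 0) ∧
  Tendsto (bketX f f1 f2 f3) atOne (nhds 0) ∧
  Tendsto (bketX f f1 f2 f3) atNegOne (nhds 0)

/-- the maximal domain `Δ_{1,max}` of `ℓ` in `L²(-1,1)`. -/
def Delta1Max (f f1 f2 : ℝ → ℂ) : Prop :=
  LocACOn f f1 ∧ LocACOn f1 f2 ∧ L2I f ∧ L2I (leg f1 f2)

/-- the domain `D(A)` of the Legendre polynomials operator. -/
def DA (f f1 f2 : ℝ → ℂ) : Prop :=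
  Delta1Max f f1 f2 ∧
  Tendsto (fun x => ((1 - x^2 : ℝ) : ℂ) * f1 x) atOne (nhds 0) ∧
  Tendsto (fun x => ((1 - x^2 : ℝ) : ℂ) * f1 x) atNegOne (nhds 0)

/-- the algebraic domain `D(A²) = {f ∈ D(A) : ℓ[f] ∈ D(A)}`. -/
def DA2 (f f1 f2 f3 f4 : ℝ → ℂ) : Prop :=
  DA f f1 f2 ∧ DA (leg f1 f2) (legD f1 f2 f3) (legDD f2 f3 f4)

/-!
The identity `x[f,1]₂ - [f,x]₂ = (1-x²)²f″ - 2(1-x²)f` shows that the right-hand side tends to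
`0` at `±1`, so it suffices that `(1-x²)f → 0`. Near `1`, boundedness of `(1-x²)²f″ - 2(1-x²)f`
gives `|f″(r)| ≤ B/(1-r)² + 2|f(r)|/(1-s)` for `r ≤ s`; integrating, with `f ∈ L² ⊆ L¹`, yields
`f′(s) = O(1/(1-s))`, hence `f(x) = O(log(1/(1-x)))` and `(1-x²)f(x) → 0`. The endpoint `-1`
follows by the reflection `x ↦ -x`.
-/

open Topology intervalIntegral

lemma atOne_eq : atOne = 𝓝[<] 1 := nhdsWithin_Ioo_eq_nhdsLT (by norm_num)

lemma atNegOne_eq : atNegOne = 𝓝[>] (-1) := nhdsWithin_Ioo_eq_nhdsGT (by norm_num)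

def bketComb (f f2 : ℝ → ℂ) (x : ℝ) : ℂ :=
  (((1 - x^2)^2 : ℝ) : ℂ) * f2 x - ((2*(1 - x^2) : ℝ) : ℂ) * f x

lemma bketComb_eq (f f1 f2 f3 : ℝ → ℂ) :
    bketComb f f2 = fun x : ℝ => (x : ℂ) * bket1 f1 f2 f3 x - bketX f f1 f2 f3 x := by
  ext x
  simp only [bketComb, bketX]
  ring

lemma bketComb_comp_neg (f f2 : ℝ → ℂ) :
    bketComb (fun x => f (-x)) (fun x => f2 (-x)) = fun x => bketComb f f2 (-x) := by
  ext x
  simp only [bketComb, neg_sq]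

lemma tendsto_bketComb {f f1 f2 f3 : ℝ → ℂ} {l : Filter ℝ} {c : ℝ} (hl : l ≤ 𝓝 c)
    (h1 : Tendsto (bket1 f1 f2 f3) l (𝓝 0)) (hX : Tendsto (bketX f f1 f2 f3) l (𝓝 0)) :
    Tendsto (bketComb f f2) l (𝓝 0) := by
  have hx : Tendsto (fun x : ℝ => (x : ℂ)) l (𝓝 c) :=
    (Complex.continuous_ofReal.tendsto c).mono_left hl
  simpa [bketComb_eq f f1 f2 f3] using (hx.mul h1).sub hX

lemma tendsto_sq_mul_of_tendsto_bketComb {f f2 : ℝ → ℂ} {l : Filter ℝ}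
    (hK : Tendsto (bketComb f f2) l (𝓝 0))
    (hf : Tendsto (fun x => ((1 - x^2 : ℝ) : ℂ) * f x) l (𝓝 0)) :
    Tendsto (fun x => (((1 - x^2)^2 : ℝ) : ℂ) * f2 x) l (𝓝 0) := by
  refine ((hK.add (hf.const_mul 2)).congr fun x => ?_).trans (by simp)
  simp only [bketComb]
  push_cast
  ring

lemma integral_inv_one_sub {a b : ℝ} (ha : a < 1) (hb : b < 1) :
    ∫ s in a..b, (1 - s)⁻¹ = Real.log (1 - a) - Real.log (1 - b) := by
  rw [integral_comp_sub_left (fun s => s⁻¹), integral_inv_of_pos (by linarith) (by linarith),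
    Real.log_div (by linarith) (by linarith)]

lemma integral_inv_one_sub_sq {a b : ℝ} (ha : a < 1) (hb : b < 1) :
    ∫ s in a..b, ((1 - s)^2)⁻¹ = (1 - b)⁻¹ - (1 - a)⁻¹ := by
  have hlt : ∀ s ∈ uIcc a b, 1 - s ≠ 0 := fun s hs =>
    sub_ne_zero.2 (hs.2.trans_lt (max_lt ha hb)).ne'
  refine integral_eq_sub_of_hasDerivAt (f := fun s => (1 - s)⁻¹) (fun s hs => ?_)
    (ContinuousOn.intervalIntegrable ?_)
  · simpa using ((hasDerivAt_id s).const_sub 1).fun_inv (hlt s hs)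
  · exact (continuousOn_const.sub continuousOn_id).pow 2 |>.inv₀
      fun s hs => pow_ne_zero 2 (hlt s hs)

namespace LocACOn

variable {f f' : ℝ → ℂ}

lemma neg (h : LocACOn f f') : LocACOn (fun x => -f x) (fun x => -f' x) := by
  intro x hx y hy
  obtain ⟨hi, hv⟩ := h x hx y hy
  refine ⟨hi.neg, ?_⟩
  simp only [intervalIntegral.integral_neg, ← hv]
  ring

lemma comp_neg (h : LocACOn f f') : LocACOn (fun x => f (-x)) (fun x => -f' (-x)) := by
  intro x hx y hy
  have hx' : -x ∈ Ioo (-1:ℝ) 1 := ⟨by linarith [hx.2], by linarith [hx.1]⟩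
  have hy' : -y ∈ Ioo (-1:ℝ) 1 := ⟨by linarith [hy.2], by linarith [hy.1]⟩
  refine ⟨?_, ?_⟩
  · have hi := ((IntervalIntegrable.iff_comp_neg (f := f')).1 (h (-y) hy' (-x) hx').1).symm
    simp only [neg_neg] at hi
    exact hi.neg
  · rw [intervalIntegral.integral_neg, integral_comp_neg, ← integral_symm,
      ← (h (-x) hx' (-y) hy').2]

lemma norm_sub_le_integral (h : LocACOn f f') {a x : ℝ} (ha : a ∈ Ioo (-1:ℝ) 1)
    (hx : x ∈ Ioo (-1:ℝ) 1) (hax : a ≤ x) {B : ℝ → ℝ} (hB : IntervalIntegrable B volume a x)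
    (hbound : ∀ s ∈ Ioc a x, ‖f' s‖ ≤ B s) :
    ‖f x - f a‖ ≤ ∫ s in a..x, B s := by
  rw [(h a ha x hx).2]
  exact norm_integral_le_of_norm_le hax (ae_of_all _ hbound) hB

lemma norm_le_of_norm_deriv_le (h : LocACOn f f') {a M : ℝ}
    (ha : a ∈ Ioo (-1:ℝ) 1) (hM : ∀ s ∈ Ioo a 1, ‖f' s‖ ≤ M * (1 - s)⁻¹) {x : ℝ}
    (hx : x ∈ Ioo a 1) :
    ‖f x‖ ≤ ‖f a‖ + M * (Real.log (1 - a) - Real.log (1 - x)) := by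
  have hint : IntervalIntegrable (fun s : ℝ => M * (1 - s)⁻¹) volume a x := by
    refine ContinuousOn.intervalIntegrable (continuousOn_const.mul (ContinuousOn.inv₀ ?_ ?_))
    · fun_prop
    · exact fun s hs => sub_ne_zero.2 (hs.2.trans_lt (max_lt ha.2 hx.2)).ne'
  have hdiff : ‖f x - f a‖ ≤ M * (Real.log (1 - a) - Real.log (1 - x)) := by
    calc ‖f x - f a‖ ≤ ∫ s in a..x, M * (1 - s)⁻¹ :=
          h.norm_sub_le_integral ha ⟨by linarith [ha.1, hx.1], hx.2⟩ hx.1.le hint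
            fun s hs => hM s ⟨hs.1, hs.2.trans_lt hx.2⟩
      _ = M * (Real.log (1 - a) - Real.log (1 - x)) := by
          rw [intervalIntegral.integral_const_mul, integral_inv_one_sub ha.2 hx.2]
  linarith [norm_le_norm_add_norm_sub' (f x) (f a)]

end LocACOn

lemma norm_le_of_norm_bketComb_le {f f2 : ℝ → ℂ} {r s B : ℝ} (hr : 0 ≤ r) (hrs : r ≤ s)
    (hs : s < 1) (hK : ‖bketComb f f2 r‖ ≤ B) :
    ‖f2 r‖ ≤ B * ((1 - r)^2)⁻¹ + (1 - s)⁻¹ * (2 * ‖f r‖) := by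
  set p := 1 - r^2
  have hs0 : 0 < 1 - s := by linarith
  have hr0 : 0 < 1 - r := by linarith
  have hp : 1 - s ≤ p := by nlinarith
  have hp' : 1 - r ≤ p := by nlinarith
  have hp0 : 0 < p := by linarith
  have hK' : p^2 * ‖f2 r‖ ≤ B + p * (2 * ‖f r‖) := by
    have := norm_sub_norm_le (((p^2 : ℝ) : ℂ) * f2 r) (((2 * p : ℝ) : ℂ) * f r)
    simp only [bketComb] at hK
    rw [norm_mul, norm_mul, Complex.norm_real, Complex.norm_real,
      Real.norm_of_nonneg (by positivity), Real.norm_of_nonneg (by positivity)] at this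
    linarith
  have hB : 0 ≤ B := (norm_nonneg _).trans hK
  calc ‖f2 r‖ ≤ B * (p^2)⁻¹ + p⁻¹ * (2 * ‖f r‖) := by
        rw [← mul_le_mul_iff_right₀ (by positivity : 0 < p^2)]
        field_simp
        linarith
    _ ≤ B * ((1 - r)^2)⁻¹ + (1 - s)⁻¹ * (2 * ‖f r‖) := by
        gcongr

lemma norm_deriv_le_of_norm_bketComb_le {f f1 f2 : ℝ → ℂ} (h12 : LocACOn f1 f2) {a B : ℝ}
    (ha0 : 0 ≤ a) (ha1 : a < 1) (hf : IntegrableOn f (Ioo a 1))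
    (hK : ∀ r ∈ Ioo a 1, ‖bketComb f f2 r‖ ≤ B) {s : ℝ} (hs : s ∈ Ioo a 1) :
    ‖f1 s‖ ≤ (‖f1 a‖ + B + 2 * ∫ r in Ioo a 1, ‖f r‖) * (1 - s)⁻¹ := by
  set C := ∫ r in Ioo a 1, ‖f r‖
  have hIoc : Ioc a s ⊆ Ioo a 1 := Ioc_subset_Ioo_right hs.2
  have hfs : IntervalIntegrable (fun r => ‖f r‖) volume a s :=
    (intervalIntegrable_iff_integrableOn_Ioc_of_le hs.1.le).2 (hf.mono_set hIoc).norm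
  have hC : ∫ r in a..s, ‖f r‖ ≤ C := by
    rw [integral_of_le hs.1.le]
    exact setIntegral_mono_set hf.norm (ae_of_all _ fun r => norm_nonneg _) hIoc.eventuallyLE
  have hinv : IntervalIntegrable (fun r : ℝ => B * ((1 - r)^2)⁻¹) volume a s := by
    refine ContinuousOn.intervalIntegrable (continuousOn_const.mul (ContinuousOn.inv₀ ?_ ?_))
    · fun_prop
    · exact fun r hr => pow_ne_zero 2 (sub_ne_zero.2 (hr.2.trans_lt (max_lt ha1 hs.2)).ne')
  have hfs' : IntervalIntegrable (fun r => (1 - s)⁻¹ * (2 * ‖f r‖)) volume a s :=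
    (hfs.const_mul 2).const_mul _
  have hdiff : ‖f1 s - f1 a‖ ≤ B * ((1 - s)⁻¹ - (1 - a)⁻¹) + (1 - s)⁻¹ * (2 * C) := by
    have ha : a ∈ Ioo (-1:ℝ) 1 := ⟨by linarith, ha1⟩
    have hsI : s ∈ Ioo (-1:ℝ) 1 := ⟨by linarith [hs.1], hs.2⟩
    calc ‖f1 s - f1 a‖
        ≤ ∫ r in a..s, (B * ((1 - r)^2)⁻¹ + (1 - s)⁻¹ * (2 * ‖f r‖)) :=
          h12.norm_sub_le_integral ha hsI hs.1.le (hinv.add hfs')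
            fun r hr => norm_le_of_norm_bketComb_le (ha0.trans hr.1.le) hr.2 hs.2
              (hK r (hIoc hr))
      _ = B * ((1 - s)⁻¹ - (1 - a)⁻¹) + (1 - s)⁻¹ * (2 * ∫ r in a..s, ‖f r‖) := by
          simp only [integral_add hinv hfs', intervalIntegral.integral_const_mul,
            integral_inv_one_sub_sq ha1 hs.2]
      _ ≤ B * ((1 - s)⁻¹ - (1 - a)⁻¹) + (1 - s)⁻¹ * (2 * C) := by
          gcongr
          exact inv_nonneg.2 (by linarith [hs.2])
  have hB : 0 ≤ B := (norm_nonneg _).trans (hK s hs)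
  have hs1 : 1 ≤ (1 - s)⁻¹ := one_le_inv₀ (by linarith [hs.2]) |>.2 (by linarith [hs.1])
  have ha1' : 0 ≤ (1 - a)⁻¹ := inv_nonneg.2 (by linarith)
  calc ‖f1 s‖ ≤ ‖f1 a‖ + ‖f1 s - f1 a‖ := norm_le_norm_add_norm_sub' _ _
    _ ≤ ‖f1 a‖ * (1 - s)⁻¹ + B * (1 - s)⁻¹ + 2 * C * (1 - s)⁻¹ := by
        nlinarith [norm_nonneg (f1 a), mul_nonneg hB ha1']
    _ = (‖f1 a‖ + B + 2 * C) * (1 - s)⁻¹ := by ring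

lemma tendsto_one_sub_sq_mul_of_norm_le_sub_log {g : ℝ → ℂ} {A M : ℝ}
    (hg : ∀ᶠ x in 𝓝[<] 1, ‖g x‖ ≤ A - M * Real.log (1 - x)) :
    Tendsto (fun x => ((1 - x^2 : ℝ) : ℂ) * g x) (𝓝[<] 1) (𝓝 0) := by
  set G : ℝ → ℝ := fun x => (1 - x^2) * A - M * (1 + x) * ((1 - x) * Real.log (1 - x))
  have hG : Tendsto G (𝓝[<] 1) (𝓝 0) := by
    have hml : Continuous fun x : ℝ => (1 - x) * Real.log (1 - x) :=
      Real.continuous_mul_log.comp (by fun_prop)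
    have hcont : Continuous G :=
      ((continuous_const.sub (continuous_pow 2)).mul continuous_const).sub
        ((continuous_const.mul (continuous_const.add continuous_id)).mul hml)
    simpa [G] using (hcont.tendsto 1).mono_left nhdsWithin_le_nhds
  refine squeeze_zero_norm' ?_ hG
  filter_upwards [hg, Ioo_mem_nhdsLT (show (-1:ℝ) < 1 by norm_num)] with x hgx hx
  have hp : 0 ≤ 1 - x^2 := by nlinarith [hx.1, hx.2]
  rw [norm_mul, Complex.norm_real, Real.norm_of_nonneg hp]
  calc (1 - x^2) * ‖g x‖ ≤ (1 - x^2) * (A - M * Real.log (1 - x)) := by gcongr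
    _ = G x := by ring

lemma tendsto_one_sub_sq_mul_nhdsLT_one {f f1 f2 : ℝ → ℂ} (h01 : LocACOn f f1)
    (h12 : LocACOn f1 f2) (hf : IntegrableOn f (Ioo 0 1))
    (hK : IsBoundedUnder (· ≤ ·) (𝓝[<] 1) fun x => ‖bketComb f f2 x‖) :
    Tendsto (fun x => ((1 - x^2 : ℝ) : ℂ) * f x) (𝓝[<] 1) (𝓝 0) := by
  obtain ⟨B, hB⟩ := hK.eventually_le
  obtain ⟨a, ⟨ha0, ha1⟩, hKa⟩ :=
    (mem_nhdsLT_iff_exists_mem_Ico_Ioo_subset (show (0:ℝ) < 1 by norm_num)).1 hB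
  set M := ‖f1 a‖ + B + 2 * ∫ r in Ioo a 1, ‖f r‖
  have hf1 : ∀ s ∈ Ioo a 1, ‖f1 s‖ ≤ M * (1 - s)⁻¹ := fun s hs =>
    norm_deriv_le_of_norm_bketComb_le h12 ha0 ha1 (hf.mono_set (Ioo_subset_Ioo_left ha0))
      (fun r hr => hKa hr) hs
  refine tendsto_one_sub_sq_mul_of_norm_le_sub_log
    (A := ‖f a‖ + M * Real.log (1 - a)) (M := M) ?_
  filter_upwards [Ioo_mem_nhdsLT ha1] with x hx
  linarith [h01.norm_le_of_norm_deriv_le ⟨by linarith, ha1⟩ hf1 hx]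

lemma tendsto_one_sub_sq_mul_nhdsGT_neg_one {f f1 f2 : ℝ → ℂ} (h01 : LocACOn f f1)
    (h12 : LocACOn f1 f2) (hf : IntegrableOn f (Ioo (-1) 0))
    (hK : IsBoundedUnder (· ≤ ·) (𝓝[>] (-1)) fun x => ‖bketComb f f2 x‖) :
    Tendsto (fun x => ((1 - x^2 : ℝ) : ℂ) * f x) (𝓝[>] (-1)) (𝓝 0) := by
  have h12' : LocACOn (fun x => -f1 (-x)) (fun x => f2 (-x)) := by
    simpa only [neg_neg] using h12.comp_neg.neg
  have hf' : IntegrableOn (fun x => f (-x)) (Ioo 0 1) := by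
    simpa [neg_Ioo] using hf.comp_neg
  have hK' : IsBoundedUnder (· ≤ ·) (𝓝[<] 1)
      fun x => ‖bketComb (fun x => f (-x)) (fun x => f2 (-x)) x‖ := by
    rw [bketComb_comp_neg]
    exact tendsto_neg_nhdsLT.isBoundedUnder_comp hK
  simpa [Function.comp_def] using
    (tendsto_one_sub_sq_mul_nhdsLT_one h01.comp_neg h12' hf' hK').comp
      (tendsto_neg_nhdsGT_neg (a := (1:ℝ)))

theorem sq_f2_tendsto_zero (f f1 f2 f3 f4 : ℝ → ℂ)
    (hf : DS f f1 f2 f3 f4) :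
    Tendsto (fun x => (((1 - x^2)^2 : ℝ) : ℂ) * f2 x) atOne (nhds 0) ∧
    Tendsto (fun x => (((1 - x^2)^2 : ℝ) : ℂ) * f2 x) atNegOne (nhds 0) := by
  obtain ⟨⟨h01, h12, -, -, hL2, -⟩, h1p, h1m, hXp, hXm⟩ := hf
  have hfi : IntegrableOn f (Ioo (-1) 1) :=
    memLp_one_iff_integrable.1 (hL2.mono_exponent (by norm_num))
  rw [atOne_eq] at h1p hXp ⊢
  rw [atNegOne_eq] at h1m hXm ⊢
  have hKp := tendsto_bketComb nhdsWithin_le_nhds h1p hXp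
  have hKm := tendsto_bketComb nhdsWithin_le_nhds h1m hXm
  exact ⟨tendsto_sq_mul_of_tendsto_bketComb hKp <| tendsto_one_sub_sq_mul_nhdsLT_one h01 h12
      (hfi.mono_set (Ioo_subset_Ioo_left (by norm_num))) hKp.norm.isBoundedUnder_le,
    tendsto_sq_mul_of_tendsto_bketComb hKm <| tendsto_one_sub_sq_mul_nhdsGT_neg_one h01 h12
      (hfi.mono_set (Ioo_subset_Ioo_right (by norm_num))) hKm.norm.isBoundedUnder_le⟩
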